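/- Limit of the sample-anchor term: for each fixed sample index i, lim_{n_w→∞} [ L_{s,i}(n_w) − log(n_w) ] = log( Σ_{c=1}^k exp(⟨w_c, h_i⟩) ) − ⟨h_i, w_{y_i}⟩. -/

import Mathlib

open scoped RealInnerProductSpace
open Filter

/-- `D_i(n_w) = Σ_{ℓ ≠ i} exp⟪h_ℓ, h_i⟫ + n_w · Σ_c exp⟪w_c, h_i⟫`. -/
noncomputable def denomD {d k n : ℕ} (w : Fin k → EuclideanSpace ℝ (Fin d))
    (h : Fin n → EuclideanSpace ℝ (Fin d)) (i : Fin n) (n_w : ℕ) : ℝ :=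
  (∑ ℓ ∈ Finset.univ.filter (fun ℓ => ℓ ≠ i), Real.exp ⟪h ℓ, h i⟫)
    + (n_w : ℝ) * ∑ c : Fin k, Real.exp ⟪w c, h i⟫

/-- Sample-anchor term
`L_{s,i}(n_w) = −(1/n_w) Σ_{j ≠ i, y_j = y_i} log(exp⟪h_i, h_j⟫ / D_i(n_w))
               − log(exp⟪h_i, w_{y_i}⟫ / D_i(n_w))`. -/
noncomputable def Ls {d k n : ℕ} (w : Fin k → EuclideanSpace ℝ (Fin d))
    (h : Fin n → EuclideanSpace ℝ (Fin d)) (y : Fin n → Fin k) (i : Fin n) (n_w : ℕ) : ℝ :=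
  -(1 / (n_w : ℝ)) *
      ∑ j ∈ Finset.univ.filter (fun j => j ≠ i ∧ y j = y i),
        Real.log (Real.exp ⟪h i, h j⟫ / denomD w h i n_w)
    - Real.log (Real.exp ⟪h i, w (y i)⟫ / denomD w h i n_w)

/-- **Limit of the sample-anchor term.** For each fixed sample index `i`,
`lim_{n_w→∞} ( L_{s,i}(n_w) − log n_w ) = log( Σ_c exp⟪w_c, h_i⟫ ) − ⟪h_i, w_{y_i}⟫`. -/
theorem sample_anchor_limit (d k n : ℕ) (hd : 0 < d) (hk : 2 ≤ k) (hn : 0 < n)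
    (w : Fin k → EuclideanSpace ℝ (Fin d)) (hw : ∀ c, ‖w c‖ = 1)
    (h : Fin n → EuclideanSpace ℝ (Fin d)) (hh : ∀ i, ‖h i‖ = 1)
    (y : Fin n → Fin k) (i : Fin n) :
    Tendsto (fun n_w : ℕ => Ls w h y i n_w - Real.log (n_w : ℝ)) atTop
      (nhds (Real.log (∑ c : Fin k, Real.exp ⟪w c, h i⟫) - ⟪h i, w (y i)⟫)) := by
  set A : ℝ := ∑ ℓ ∈ Finset.univ.filter (fun ℓ => ℓ ≠ i), Real.exp ⟪h ℓ, h i⟫ with hAdef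
  set S : ℝ := ∑ c : Fin k, Real.exp ⟪w c, h i⟫ with hSdef
  have hS : 0 < S := by
    apply Finset.sum_pos (fun c _ => Real.exp_pos _)
    exact ⟨⟨0, by omega⟩, Finset.mem_univ _⟩
  have hA : 0 ≤ A := Finset.sum_nonneg fun _ _ => (Real.exp_pos _).le
  set B : ℝ := ⟪h i, w (y i)⟫ with hBdef
  set J := Finset.univ.filter (fun j : Fin n => j ≠ i ∧ y j = y i) with hJdef
  set C : ℝ := ∑ j ∈ J, ⟪h i, h j⟫ with hCdef
  set m : ℝ := (J.card : ℝ) with hmdef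
  have key : ∀ n_w : ℕ, 1 ≤ n_w →
      Ls w h y i n_w - Real.log (n_w : ℝ) =
        (-C) * (1 / (n_w : ℝ)) + m * (Real.log (n_w : ℝ) / (n_w : ℝ))
          + m * Real.log (A / (n_w : ℝ) + S) * (1 / (n_w : ℝ))
          + Real.log (A / (n_w : ℝ) + S) - B := by
    intro n_w hn_w
    have hnw0 : (0 : ℝ) < (n_w : ℝ) := by exact_mod_cast hn_w
    have hAS : 0 < A / (n_w : ℝ) + S := by positivity
    have hD : denomD w h i n_w = A + (n_w : ℝ) * S := rfl
    have hDpos : (0 : ℝ) < A + (n_w : ℝ) * S := by positivity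
    have hlogD : Real.log (A + (n_w : ℝ) * S)
        = Real.log (n_w : ℝ) + Real.log (A / (n_w : ℝ) + S) := by
      rw [← Real.log_mul hnw0.ne' hAS.ne']
      congr 1
      field_simp
    have hlog : ∀ a : ℝ, Real.log (Real.exp a / denomD w h i n_w)
        = a - Real.log (A + (n_w : ℝ) * S) := by
      intro a
      rw [hD, Real.log_div (Real.exp_ne_zero a) hDpos.ne', Real.log_exp]
    have hsum : ∑ j ∈ J, Real.log (Real.exp ⟪h i, h j⟫ / denomD w h i n_w)
        = C - m * Real.log (A + (n_w : ℝ) * S) := by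
      simp only [hlog]
      rw [Finset.sum_sub_distrib, Finset.sum_const, nsmul_eq_mul]
    have hB' : (⟪h i, w (y i)⟫ : ℝ) = B := rfl
    unfold Ls
    rw [hsum, hlog, hlogD, hB']
    field_simp
    ring
  have hlim : Tendsto (fun n_w : ℕ =>
      (-C) * (1 / (n_w : ℝ)) + m * (Real.log (n_w : ℝ) / (n_w : ℝ))
        + m * Real.log (A / (n_w : ℝ) + S) * (1 / (n_w : ℝ))
        + Real.log (A / (n_w : ℝ) + S) - B) atTop (nhds (Real.log S - B)) := by
    have h1 : Tendsto (fun n_w : ℕ => 1 / (n_w : ℝ)) atTop (nhds 0) :=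
      tendsto_one_div_atTop_nhds_zero_nat
    have h2 : Tendsto (fun n_w : ℕ => Real.log (n_w : ℝ) / (n_w : ℝ)) atTop (nhds 0) :=
      (Real.isLittleO_log_id_atTop.tendsto_div_nhds_zero).comp tendsto_natCast_atTop_atTop
    have h3 : Tendsto (fun n_w : ℕ => Real.log (A / (n_w : ℝ) + S)) atTop
        (nhds (Real.log S)) := by
      have hAS : Tendsto (fun n_w : ℕ => A / (n_w : ℝ) + S) atTop (nhds S) := by
        have := h1.const_mul A
        simp only [mul_one_div] at this
        simpa using this.add_const S
      exact (Real.continuousAt_log hS.ne').tendsto.comp hAS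
    have := (((h1.const_mul (-C)).add (h2.const_mul m)).add
        (((h3.const_mul m).mul h1))).add (h3.sub_const B)
    convert this using 2 <;> ring
  refine Tendsto.congr' ?_ hlim
  filter_upwards [eventually_ge_atTop 1] with n_w hn_w
  exact (key n_w hn_w).symm
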